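/- arXiv:2412.18746 — 3 statements merged into one kernel-verified Lean document; each statement's English description precedes it below -/
import Mathlib

section
/- Let t, μ, m be positive integers with μ < m. Then the sum over c from 0 to t−1 of max(μ − m·c·(t−c)/t², 0) is strictly greater than μ²·t/(2m). -/
/-- For positive integers `t, μ, m` with `μ < m`,
`∑_{c=0}^{t-1} max(μ - m·c·(t-c)/t², 0) > μ²·t/(2m)`. -/
theorem sum_max_gt (t μ m : ℕ) (ht : 0 < t) (hμ : 0 < μ) (hm : 0 < m) (hμm : μ < m) :
    (μ : ℚ) ^ 2 * t / (2 * m) <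
      ∑ c ∈ Finset.range t, max ((μ : ℚ) - m * c * ((t : ℚ) - c) / t ^ 2) 0 := by
  set N : ℕ := μ * t / m with hN
  have hNle' : m * N ≤ μ * t := by
    rw [hN]; exact Nat.mul_div_le (μ * t) m
  have hNlt : μ * t < m * (N + 1) := by
    rw [hN]; exact Nat.lt_mul_div_succ _ hm
  have hNt : N + 1 ≤ t := by
    have : m * N < m * t := lt_of_le_of_lt hNle' (by nlinarith)
    have := Nat.lt_of_mul_lt_mul_left this
    omega
  have ht' : (0 : ℚ) < t := by positivity
  have hm' : (0 : ℚ) < m := by positivity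
  have hμ' : (0 : ℚ) < μ := by positivity
  -- Step 1: restrict sum to range (N+1)
  have step1 : ∑ c ∈ Finset.range (N + 1), max ((μ : ℚ) - m * c * ((t : ℚ) - c) / t ^ 2) 0 ≤
      ∑ c ∈ Finset.range t, max ((μ : ℚ) - m * c * ((t : ℚ) - c) / t ^ 2) 0 :=
    Finset.sum_le_sum_of_subset_of_nonneg (Finset.range_subset_range.2 hNt)
      (fun i _ _ => le_max_right _ _)
  -- Step 2: lower bound each term
  have step2 : ∑ c ∈ Finset.range (N + 1), ((μ : ℚ) - m * c / t) ≤
      ∑ c ∈ Finset.range (N + 1), max ((μ : ℚ) - m * c * ((t : ℚ) - c) / t ^ 2) 0 := by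
    refine Finset.sum_le_sum fun c hc => le_trans ?_ (le_max_left _ _)
    have hc' : (c : ℚ) ≤ t := by
      have : c < t := lt_of_lt_of_le (Finset.mem_range.1 hc) hNt
      exact_mod_cast this.le
    have hc0 : (0 : ℚ) ≤ c := Nat.cast_nonneg c
    have hm0 : (0 : ℚ) ≤ m := hm'.le
    rw [sub_le_sub_iff_left, div_le_div_iff₀ (by positivity) ht']
    nlinarith [mul_nonneg (mul_nonneg (mul_nonneg hm0 hc0) hc0) ht'.le]
  -- Gauss sum
  have hgauss : (∑ c ∈ Finset.range (N + 1), (c : ℚ)) = N * (N + 1) / 2 := by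
    have h2 := Finset.sum_range_id_mul_two (N + 1)
    have h3 : ((∑ i ∈ Finset.range (N + 1), i : ℕ) : ℚ) * 2 = (N + 1) * N := by
      exact_mod_cast h2
    push_cast at h3
    linarith
  have hsum : ∑ c ∈ Finset.range (N + 1), ((μ : ℚ) - m * c / t) =
      (N + 1) * μ - (m / t) * (N * (N + 1) / 2) := by
    rw [Finset.sum_sub_distrib, Finset.sum_const, Finset.card_range, nsmul_eq_mul]
    have : ∑ c ∈ Finset.range (N + 1), ((m : ℚ) * c / t) =
        (m / t) * ∑ c ∈ Finset.range (N + 1), (c : ℚ) := by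
      rw [Finset.mul_sum]; exact Finset.sum_congr rfl fun c _ => by ring
    rw [this, hgauss]
    push_cast
    ring
  -- Final algebra
  have hA : (m : ℚ) * N ≤ μ * t := by exact_mod_cast hNle'
  have hB : (μ : ℚ) * t < m * (N + 1) := by exact_mod_cast hNlt
  have final : (μ : ℚ) ^ 2 * t / (2 * m) < (N + 1) * μ - (m / t) * (N * (N + 1) / 2) := by
    rw [div_lt_iff₀ (by positivity), ← sub_pos]
    have key : ((μ : ℚ) * t - m * N) * (m * (N + 1) - μ * t) ≥ 0 :=
      mul_nonneg (by linarith) (by linarith)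
    have expand : ((N + 1 : ℚ) * μ - (m / t) * (N * (N + 1) / 2)) * (2 * m) - μ ^ 2 * t =
        (((μ : ℚ) * t - m * N) * (m * (N + 1) - μ * t) + m * (μ * t)) / t := by
      field_simp
      ring
    rw [expand]
    positivity
  linarith [hsum ▸ le_trans step2 step1]
end

section
/- Let Γ ⊆ SL(2,ℤ) be a subgroup of finite index and let U = [[0,1],[1,0]]. Define W₀(Γ) = {(x,y) ∈ ℚ² : x is in the (UΓU)-orbit of ∞ under Möbius action, and y·Denom(x) ∈ ℤ}, where Denom(x) is the minimal positive denominator of x. Then W₀(Γ) is dense in ℝ². -/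
open OnePoint

/-- The Möbius action of an integral 2×2 matrix `g = [[a,b],[c,d]]` on the extended
real line `P¹(ℝ) = ℝ ∪ {∞}`. -/
noncomputable def moebius (g : Matrix (Fin 2) (Fin 2) ℤ) (p : OnePoint ℝ) : OnePoint ℝ :=
  Option.elim (p : Option ℝ)
    (if (g 1 0 : ℝ) = 0 then (∞ : OnePoint ℝ) else ((g 0 0 : ℝ) / (g 1 0 : ℝ) : ℝ))
    (fun x => if (g 1 0 : ℝ) * x + (g 1 1 : ℝ) = 0 then (∞ : OnePoint ℝ)
      else ((((g 0 0 : ℝ) * x + (g 0 1 : ℝ)) / ((g 1 0 : ℝ) * x + (g 1 1 : ℝ)) : ℝ) : OnePoint ℝ))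

/-- The matrix `U = [[0,1],[1,0]]`. -/
def Umat : Matrix (Fin 2) (Fin 2) ℤ := !![0, 1; 1, 0]

/-!
If `[[a, b], [c, d]] ∈ Γ` then `UγU · ∞ = d / b`. For a cusp `p / q`, the parabolic element
`1 + N` with `N = [[pq, -q²], [p², -pq]]` (so `N² = 0`) has a power `1 + nN`, `n > 0`, in the
finite-index subgroup `Γ`, which puts `p/q - 1/(nq²) = (npq - 1)/(nq²)` into the orbit. This
fraction is in lowest terms, so its denominator `nq² ≥ q` is large and it lies within `1/q` of
`p/q`. Choosing `p/q` close to a given real number makes both the orbit point and the grid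
`{k / nq²}` of admissible second coordinates arbitrarily fine.
-/
theorem one_add_pow_of_mul_self_eq_zero {R : Type*} [Semiring R] {N : R} (hN : N * N = 0)
    (n : ℕ) : (1 + N) ^ n = 1 + n • N := by
  induction n with
  | zero => simp
  | succ n ih =>
    rw [pow_succ, ih, add_mul, one_mul, mul_add, mul_one, smul_mul_assoc, hN, smul_zero,
      add_zero, succ_nsmul]
    abel

theorem moebius_infty_of_ne_zero {g : Matrix (Fin 2) (Fin 2) ℤ} (hg : g 1 0 ≠ 0) :
    moebius g ∞ = (((g 0 0 : ℝ) / g 1 0 : ℝ) : OnePoint ℝ) :=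
  if_neg (by exact_mod_cast hg)

theorem Umat_mul_mul_Umat (g : Matrix (Fin 2) (Fin 2) ℤ) :
    Umat * g * Umat = !![g 1 1, g 1 0; g 0 1, g 0 0] := by
  rw [g.eta_fin_two]
  simp [Umat]

/-- The nilpotent part of the parabolic element of `SL(2,ℤ)` fixing the cusp `p / q`. -/
def parabolicNilpotent (p q : ℤ) : Matrix (Fin 2) (Fin 2) ℤ := !![p * q, -q ^ 2; p ^ 2, -(p * q)]

theorem parabolicNilpotent_mul_self (p q : ℤ) :
    parabolicNilpotent p q * parabolicNilpotent p q = 0 := by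
  ext i j
  fin_cases i <;> fin_cases j <;> simp [parabolicNilpotent] <;> ring

def parabolic (p q : ℤ) : Matrix.SpecialLinearGroup (Fin 2) ℤ :=
  ⟨1 + parabolicNilpotent p q, by
    simp [parabolicNilpotent, Matrix.one_fin_two, Matrix.det_fin_two]; ring⟩

theorem val_parabolic_pow (p q : ℤ) (n : ℕ) :
    (parabolic p q ^ n).val = 1 + n • parabolicNilpotent p q :=
  one_add_pow_of_mul_self_eq_zero (parabolicNilpotent_mul_self p q) n

theorem moebius_conj_parabolic_pow_infty (p : ℤ) {q : ℤ} (hq : q ≠ 0) {n : ℕ} (hn : n ≠ 0) :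
    moebius (Umat * (parabolic p q ^ n).val * Umat) ∞
      = ((((n * p * q - 1 : ℤ) : ℚ) / (n * q ^ 2 : ℤ) : ℚ) : ℝ) := by
  rw [Umat_mul_mul_Umat, val_parabolic_pow, moebius_infty_of_ne_zero]
  · simp [parabolicNilpotent]
    ring
  · simp [parabolicNilpotent, hq, hn]

/-- The rationals in the orbit of `∞` under `UΓU`. -/
def conjOrbitInfty (Γ : Subgroup (Matrix.SpecialLinearGroup (Fin 2) ℤ)) : Set ℚ :=
  {x | ∃ γ ∈ Γ, moebius (Umat * γ.val * Umat) ∞ = ((x : ℝ) : OnePoint ℝ)}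

theorem exists_mem_conjOrbitInfty_of_finiteIndex
    {Γ : Subgroup (Matrix.SpecialLinearGroup (Fin 2) ℤ)} (hΓ : Γ.FiniteIndex) (p : ℤ) {q : ℤ} (hq : q ≠ 0) :
    ∃ n : ℕ, 0 < n ∧ ((n * p * q - 1 : ℤ) : ℚ) / (n * q ^ 2 : ℤ) ∈ conjOrbitInfty Γ := by
  obtain ⟨n, hn, -, hmem⟩ := Γ.exists_pow_mem_of_index_ne_zero hΓ.index_ne_zero (parabolic p q)
  exact ⟨n, hn, _, hmem, moebius_conj_parabolic_pow_infty p hq hn.ne'⟩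

theorem den_mul_sub_one_div (p : ℤ) {q n : ℤ} (hq : q ≠ 0) (hn : 0 < n) :
    ((((n * p * q - 1 : ℤ) : ℚ) / (n * q ^ 2 : ℤ)).den : ℤ) = n * q ^ 2 := by
  have hcop : IsCoprime (n * p * q - 1) (n * q ^ 2) :=
    ⟨-(n * p * q + 1), n * p ^ 2, by ring⟩
  exact Rat.den_div_eq_of_coprime (by positivity) (Int.isCoprime_iff_gcd_eq_one.mp hcop)

theorem dense_setOf_den_grid (S : Set ℚ)
    (hS : ∀ a : ℝ, ∀ ε > 0, ∃ x ∈ S, |(x : ℝ) - a| < ε ∧ (x.den : ℝ)⁻¹ < ε) :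
    Dense {p : ℝ × ℝ | ∃ x y : ℚ, x ∈ S ∧ (∃ z : ℤ, y * x.den = z) ∧ p = ((x : ℝ), (y : ℝ))} := by
  rw [Metric.dense_iff]
  rintro ⟨a, b⟩ r hr
  obtain ⟨x, hxS, hxa, hden⟩ := hS a r hr
  set k := ⌊b * x.den⌋
  have hd : (0 : ℝ) < x.den := by positivity
  refine ⟨((x : ℝ), ((k / x.den : ℚ) : ℝ)), ?_, x, k / x.den, hxS,
    ⟨k, div_mul_cancel₀ _ (by positivity)⟩, rfl⟩
  rw [Metric.mem_ball, Prod.dist_eq, max_lt_iff, Real.dist_eq, Real.dist_eq]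
  refine ⟨hxa, ?_⟩
  have hk : (k : ℝ) ≤ b * x.den := Int.floor_le _
  have hk' : b * x.den < k + 1 := Int.lt_floor_add_one _
  have hdist : b - ((k / x.den : ℚ) : ℝ) = (b * x.den - k) / x.den := by
    push_cast
    field_simp
  have hrd : 1 < r * x.den := by rwa [inv_lt_iff_one_lt_mul₀ hd] at hden
  rw [abs_sub_comm, hdist, abs_of_nonneg (div_nonneg (by linarith) hd.le), div_lt_iff₀ hd]
  linarith

theorem exists_mem_conjOrbitInfty_near {Γ : Subgroup (Matrix.SpecialLinearGroup (Fin 2) ℤ)}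
    (hΓ : Γ.FiniteIndex) (a : ℝ) {ε : ℝ} (hε : 0 < ε) :
    ∃ x ∈ conjOrbitInfty Γ, |(x : ℝ) - a| < ε ∧ (x.den : ℝ)⁻¹ < ε := by
  obtain ⟨q, hq⟩ := exists_nat_gt (2 / ε)
  have hq0 : (0 : ℝ) < q := lt_trans (by positivity) hq
  have hqε : 2 * (q : ℝ)⁻¹ < ε := by rw [← div_eq_mul_inv, div_lt_comm₀ hq0 hε]; exact hq
  have hq1 : (1 : ℝ) ≤ q := Nat.one_le_cast.mpr (Nat.cast_pos.mp hq0)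
  have hqZ : (q : ℤ) ≠ 0 := by exact_mod_cast hq0.ne'
  set p := ⌊q * a⌋
  obtain ⟨n, hn, hx⟩ := exists_mem_conjOrbitInfty_of_finiteIndex hΓ p hqZ
  have hn1 : (1 : ℝ) ≤ n := by exact_mod_cast hn
  have hden : ((((n * p * q - 1 : ℤ) : ℚ) / (n * q ^ 2 : ℤ)).den : ℝ) = n * q ^ 2 := by
    exact_mod_cast den_mul_sub_one_div p hqZ (n := n) (by exact_mod_cast hn)
  have hnq : (n * q ^ 2 : ℝ)⁻¹ ≤ (q : ℝ)⁻¹ := inv_anti₀ hq0 (by nlinarith)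
  refine ⟨_, hx, ?_, by rw [hden]; linarith⟩
  have hrepr : ((((n * p * q - 1 : ℤ) : ℚ) / (n * q ^ 2 : ℤ) : ℚ) : ℝ)
      = p / q - (n * q ^ 2 : ℝ)⁻¹ := by
    push_cast
    field_simp
  have hpa : (p : ℝ) / q ≤ a := by rw [div_le_iff₀' hq0]; exact Int.floor_le _
  have hap : a < p / q + (q : ℝ)⁻¹ := by
    rw [← one_div, ← add_div, lt_div_iff₀' hq0]; exact Int.lt_floor_add_one _
  have hnq0 : 0 < (n * q ^ 2 : ℝ)⁻¹ := by positivity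
  rw [hrepr, abs_sub_lt_iff]
  constructor <;> linarith

/-- For a finite-index subgroup `Γ ⊆ SL(2,ℤ)`, the set
`W₀(Γ) = {(x,y) ∈ ℚ² : x ∈ (UΓU)-orbit(∞), y·Denom(x) ∈ ℤ}` is dense in `ℝ²`,
where `Denom(x)` is the minimal positive denominator of `x`. -/
theorem W0_dense (Γ : Subgroup (Matrix.SpecialLinearGroup (Fin 2) ℤ))
    (hΓ : Γ.FiniteIndex) :
    Dense {p : ℝ × ℝ | ∃ x y : ℚ,
      (∃ γ ∈ Γ, moebius (Umat * (γ : Matrix.SpecialLinearGroup (Fin 2) ℤ).val * Umat) ∞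
          = (((x : ℝ) : OnePoint ℝ))) ∧
      (∃ z : ℤ, y * (x.den : ℚ) = (z : ℚ)) ∧
      p = ((x : ℝ), (y : ℝ))} :=
  dense_setOf_den_grid (conjOrbitInfty Γ) fun a _ hε => exists_mem_conjOrbitInfty_near hΓ a hε
end

section
/- The ring ℂ^{X̄(N)} of formal Fourier series supported on X̄(N) = {[[n, r/2],[r/2, Nm]] positive semidefinite : n, r, m ∈ ℤ}, with multiplication given by the Cauchy product a(t; ψ₁ψ₂) = Σ_{t₁+t₂=t, t_i ∈ X̄(N)} a(t₁;ψ₁)a(t₂;ψ₂), is an integral domain. -/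
/-- `X̄(N)`: triples `(n, r, m) ∈ ℤ³` such that the half-integral matrix
`[[n, r/2],[r/2, Nm]]` is positive semidefinite, i.e. `n ≥ 0`, `m ≥ 0` and
`r² ≤ 4·N·n·m`. -/
def XBar (N : ℕ) : Set (ℤ × ℤ × ℤ) :=
  {t | 0 ≤ t.1 ∧ 0 ≤ t.2.2 ∧ t.2.1 ^ 2 ≤ 4 * (N : ℤ) * t.1 * t.2.2}

/-- The Cauchy product on formal Fourier series:
`a(t; ψ₁ψ₂) = Σ_{t₁+t₂=t} a(t₁;ψ₁)·a(t₂;ψ₂)`. -/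
noncomputable def cauchyProd (ψ₁ ψ₂ : ℤ × ℤ × ℤ → ℂ) : ℤ × ℤ × ℤ → ℂ :=
  fun t => ∑ᶠ p : (ℤ × ℤ × ℤ) × (ℤ × ℤ × ℤ),
    if p.1 + p.2 = t then ψ₁ p.1 * ψ₂ p.2 else 0

/-- The additive lexicographic "monomial weight" `t ↦ (n, n+r+Nm, Nm)` used to
pick extreme points of the supports. -/
def lexWt (N : ℕ) (t : ℤ × ℤ × ℤ) : ℕ ×ₗ (ℕ ×ₗ ℕ) :=
  toLex (t.1.toNat, toLex ((t.1 + t.2.1 + N * t.2.2).toNat, ((N : ℤ) * t.2.2).toNat))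

lemma lexWt_nonneg₂ {N : ℕ} (hN : 0 < N) {t : ℤ × ℤ × ℤ} (ht : t ∈ XBar N) :
    0 ≤ t.1 + t.2.1 + N * t.2.2 := by
  obtain ⟨h1, h2, h3⟩ := ht
  have hN' : (1 : ℤ) ≤ N := by exact_mod_cast hN
  by_contra h
  push_neg at h
  have hb : 0 ≤ t.1 + (N : ℤ) * t.2.2 := by positivity
  have hr : t.2.1 + (t.1 + (N : ℤ) * t.2.2) < 0 := by linarith
  have hr2 : t.2.1 - (t.1 + (N : ℤ) * t.2.2) < 0 := by linarith
  nlinarith [mul_pos (neg_pos.2 hr) (neg_pos.2 hr2), sq_nonneg (t.1 - (N : ℤ) * t.2.2)]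

lemma lexWt_add {N : ℕ} (hN : 0 < N) {p q : ℤ × ℤ × ℤ}
    (hp : p ∈ XBar N) (hq : q ∈ XBar N) :
    lexWt N (p + q) = lexWt N p + lexWt N q := by
  have hp1 := hp.1; have hp2 := hp.2.1
  have hq1 := hq.1; have hq2 := hq.2.1
  have hp3 := lexWt_nonneg₂ hN hp
  have hq3 := lexWt_nonneg₂ hN hq
  have hNp : 0 ≤ (N : ℤ) * p.2.2 := by positivity
  have hNq : 0 ≤ (N : ℤ) * q.2.2 := by positivity
  unfold lexWt
  rw [show (p + q).1 = p.1 + q.1 from rfl, show (p + q).2.1 = p.2.1 + q.2.1 from rfl,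
    show (p + q).2.2 = p.2.2 + q.2.2 from rfl]
  rw [show p.1 + q.1 + (p.2.1 + q.2.1) + (N : ℤ) * (p.2.2 + q.2.2)
      = (p.1 + p.2.1 + (N : ℤ) * p.2.2) + (q.1 + q.2.1 + (N : ℤ) * q.2.2) by ring,
    show (N : ℤ) * (p.2.2 + q.2.2) = (N : ℤ) * p.2.2 + (N : ℤ) * q.2.2 by ring,
    Int.toNat_add hp1 hq1, Int.toNat_add hp3 hq3, Int.toNat_add hNp hNq]
  rfl

lemma lexWt_inj {N : ℕ} (hN : 0 < N) {p q : ℤ × ℤ × ℤ}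
    (hp : p ∈ XBar N) (hq : q ∈ XBar N) (h : lexWt N p = lexWt N q) : p = q := by
  have hp1 := hp.1; have hp2 := hp.2.1
  have hq1 := hq.1; have hq2 := hq.2.1
  have hp3 := lexWt_nonneg₂ hN hp
  have hq3 := lexWt_nonneg₂ hN hq
  have hNp : 0 ≤ (N : ℤ) * p.2.2 := by positivity
  have hNq : 0 ≤ (N : ℤ) * q.2.2 := by positivity
  have hN' : (0 : ℤ) < N := by exact_mod_cast hN
  unfold lexWt at h
  have h1 : p.1.toNat = q.1.toNat := congrArg (fun x => (ofLex x).1) h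
  have h2 : (p.1 + p.2.1 + N * p.2.2).toNat = (q.1 + q.2.1 + N * q.2.2).toNat :=
    congrArg (fun x => (ofLex (ofLex x).2).1) h
  have h3 : ((N : ℤ) * p.2.2).toNat = ((N : ℤ) * q.2.2).toNat :=
    congrArg (fun x => (ofLex (ofLex x).2).2) h
  have e1 : p.1 = q.1 := by omega
  have e3 : (N : ℤ) * p.2.2 = (N : ℤ) * q.2.2 := by omega
  have e3' : p.2.2 = q.2.2 := by
    exact mul_left_cancel₀ (ne_of_gt hN') e3
  have e2 : p.2.1 = q.2.1 := by omega
  exact Prod.ext e1 (Prod.ext e2 e3')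

/-- The ring `ℂ^{X̄(N)}` of formal Fourier series supported on `X̄(N)`, with the
Cauchy product, is an integral domain: it has no zero divisors. -/
theorem formal_fourier_series_domain (N : ℕ) (hN : 0 < N)
    (ψ₁ ψ₂ : ℤ × ℤ × ℤ → ℂ)
    (h₁ : ∀ t ∉ XBar N, ψ₁ t = 0) (h₂ : ∀ t ∉ XBar N, ψ₂ t = 0)
    (hmul : cauchyProd ψ₁ ψ₂ = 0) :
    ψ₁ = 0 ∨ ψ₂ = 0 := by
  by_contra hc
  push_neg at hc
  obtain ⟨hψ₁, hψ₂⟩ := hc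
  -- nonempty supports
  have hs₁ : ∃ t, ψ₁ t ≠ 0 := by
    by_contra h; push_neg at h; exact hψ₁ (funext fun t => h t)
  have hs₂ : ∃ t, ψ₂ t ≠ 0 := by
    by_contra h; push_neg at h; exact hψ₂ (funext fun t => h t)
  -- pick lex-minimal weights of the supports
  have wf : WellFounded ((· < ·) : (ℕ ×ₗ (ℕ ×ₗ ℕ)) → _ → Prop) := wellFounded_lt
  obtain ⟨u₁, hu₁⟩ := hs₁
  obtain ⟨u₂, hu₂⟩ := hs₂
  set W₁ : Set (ℕ ×ₗ (ℕ ×ₗ ℕ)) := lexWt N '' {t | ψ₁ t ≠ 0} with hW₁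
  set W₂ : Set (ℕ ×ₗ (ℕ ×ₗ ℕ)) := lexWt N '' {t | ψ₂ t ≠ 0} with hW₂
  have hW₁ne : W₁.Nonempty := ⟨lexWt N u₁, ⟨u₁, hu₁, rfl⟩⟩
  have hW₂ne : W₂.Nonempty := ⟨lexWt N u₂, ⟨u₂, hu₂, rfl⟩⟩
  obtain ⟨t₁, ht₁, ht₁min⟩ : ∃ t₁, ψ₁ t₁ ≠ 0 ∧ ∀ p, ψ₁ p ≠ 0 → lexWt N t₁ ≤ lexWt N p := by
    obtain ⟨t₁, ht₁, he⟩ := wf.min_mem W₁ hW₁ne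
    refine ⟨t₁, ht₁, fun p hp => ?_⟩
    rw [he]
    exact le_of_not_gt (wf.not_lt_min W₁ ⟨p, hp, rfl⟩)
  obtain ⟨t₂, ht₂, ht₂min⟩ : ∃ t₂, ψ₂ t₂ ≠ 0 ∧ ∀ p, ψ₂ p ≠ 0 → lexWt N t₂ ≤ lexWt N p := by
    obtain ⟨t₂, ht₂, he⟩ := wf.min_mem W₂ hW₂ne
    refine ⟨t₂, ht₂, fun p hp => ?_⟩
    rw [he]
    exact le_of_not_gt (wf.not_lt_min W₂ ⟨p, hp, rfl⟩)
  have ht₁X : t₁ ∈ XBar N := by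
    by_contra h; exact ht₁ (h₁ t₁ h)
  have ht₂X : t₂ ∈ XBar N := by
    by_contra h; exact ht₂ (h₂ t₂ h)
  -- the Cauchy product at t₁ + t₂ reduces to a single term
  have key : ∀ p : (ℤ × ℤ × ℤ) × (ℤ × ℤ × ℤ), p ≠ (t₁, t₂) →
      (if p.1 + p.2 = t₁ + t₂ then ψ₁ p.1 * ψ₂ p.2 else 0) = 0 := by
    intro p hp
    by_cases hsum : p.1 + p.2 = t₁ + t₂
    · rw [if_pos hsum]
      by_cases hz₁ : ψ₁ p.1 = 0
      · rw [hz₁, zero_mul]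
      by_cases hz₂ : ψ₂ p.2 = 0
      · rw [hz₂, mul_zero]
      exfalso
      have hp₁X : p.1 ∈ XBar N := by
        by_contra h; exact hz₁ (h₁ p.1 h)
      have hp₂X : p.2 ∈ XBar N := by
        by_contra h; exact hz₂ (h₂ p.2 h)
      have hadd : lexWt N p.1 + lexWt N p.2 = lexWt N t₁ + lexWt N t₂ := by
        rw [← lexWt_add hN hp₁X hp₂X, ← lexWt_add hN ht₁X ht₂X, hsum]
      have hle₁ : lexWt N t₁ ≤ lexWt N p.1 := ht₁min p.1 hz₁
      have hle₂ : lexWt N t₂ ≤ lexWt N p.2 := ht₂min p.2 hz₂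
      have heq₁ : lexWt N p.1 = lexWt N t₁ := by
        by_contra h
        have h' : lexWt N t₁ < lexWt N p.1 := lt_of_le_of_ne hle₁ (Ne.symm h)
        have h'' : lexWt N t₁ + lexWt N t₂ < lexWt N p.1 + lexWt N p.2 :=
          add_lt_add_of_lt_of_le h' hle₂
        exact (ne_of_lt h'') hadd.symm
      have heq₂ : lexWt N p.2 = lexWt N t₂ := by
        rw [heq₁] at hadd
        exact add_left_cancel hadd
      have e₁ : p.1 = t₁ := lexWt_inj hN hp₁X ht₁X heq₁
      have e₂ : p.2 = t₂ := lexWt_inj hN hp₂X ht₂X heq₂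
      exact hp (Prod.ext e₁ e₂)
    · rw [if_neg hsum]
  have hval : cauchyProd ψ₁ ψ₂ (t₁ + t₂) = ψ₁ t₁ * ψ₂ t₂ := by
    unfold cauchyProd
    rw [finsum_eq_single _ ((t₁, t₂) : (ℤ × ℤ × ℤ) × (ℤ × ℤ × ℤ)) key]
    simp
  rw [hmul] at hval
  exact mul_ne_zero ht₁ ht₂ hval.symm
end
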